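/- arXiv:1601.03978 — 5 statements merged into one kernel-verified Lean document; each statement's English description precedes it below -/
import Mathlib

section
/- (Stechkin's lemma) Let a_1 ≥ a_2 ≥ ⋯ be a sequence of nonnegative real numbers. Then (1/2) ∑_{n=1}^∞ n^{-1/2} (∑_{k=n}^∞ a_k^2)^{1/2} ≤ ∑_{k=1}^∞ a_k ≤ (2/√3) ∑_{n=1}^∞ n^{-1/2} (∑_{k=n}^∞ a_k^2)^{1/2}. -/
/-!
Lower bound. Write `a k = ∑_{t ≥ k} c t` with `c t = a t - a (t + 1) ≥ 0`. Expanding the square,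
`‖(a (n + k))_k‖₂ ≤ ∑_t √(t + 1) c (n + t)`; multiplying by `(n + 1)^(-1/2)`, summing over `n` and
regrouping along antidiagonals, `c K` gets the coefficient
`∑_{i + j = K} √(j + 1) / √(i + 1) ≤ 2 (K + 1)`, and `∑_K (K + 1) c K = ∑_k a k`.

Upper bound (for any sequence). With `w m = 4 / √(m (m + 4))` we have `w m ^ 2 = 4/m - 4/(m + 4)`,
so the weights `w (n + 1 + 4 j)`, `j ≥ 0`, have squared `ℓ²` norm `4 / (n + 1)` and Cauchy–Schwarz
gives `∑_j w (n + 1 + 4 j) a (n + j) ≤ 2 (n + 1)^(-1/2) ‖(a (n + j))_j‖₂`. Summing over `n`, the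
coefficient of `a K` is `∑_{j ≤ K} w (K + 1 + 3 j)`, which is at least `√3`: compare it with
`4/3 · log ((4 K + 9/2) / (K + 3/2))` for `K ≥ 4`, and bound `w` below by a rational function
for `K < 4`.
-/

open scoped ENNReal
open Finset Filter Topology

namespace ENNReal

theorem inner_le_Lp_mul_Lq_tsum {ι : Type*} {p q : ℝ} (hpq : p.HolderConjugate q)
    (f g : ι → ℝ≥0∞) :
    ∑' i, f i * g i ≤ (∑' i, f i ^ p) ^ (1 / p) * (∑' i, g i ^ q) ^ (1 / q) := by
  rw [ENNReal.tsum_eq_iSup_sum]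
  refine iSup_le fun s => (ENNReal.inner_le_Lp_mul_Lq s f g hpq).trans ?_
  gcongr
  · exact hpq.one_div_nonneg
  · exact ENNReal.sum_le_tsum s
  · exact hpq.symm.one_div_nonneg
  · exact ENNReal.sum_le_tsum s

theorem tsum_mul_tsum {ι κ : Type*} (f : ι → ℝ≥0∞) (g : κ → ℝ≥0∞) :
    (∑' i, f i) * ∑' j, g j = ∑' i, ∑' j, f i * g j := by
  rw [← ENNReal.tsum_mul_right]
  simp_rw [← ENNReal.tsum_mul_left]

theorem tsum_tsum_mul_add_eq_tsum_antidiagonal (w : ℕ → ℕ → ℝ≥0∞) (b : ℕ → ℝ≥0∞) :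
    ∑' i, ∑' j, w i j * b (i + j) = ∑' n, (∑ p ∈ antidiagonal n, w p.1 p.2) * b n := by
  rw [← ENNReal.tsum_prod, ← HasAntidiagonal.sigmaAntidiagonalEquivProd.tsum_eq,
    ENNReal.tsum_sigma']
  refine tsum_congr fun n => ?_
  rw [sum_mul, ← Finset.tsum_subtype]
  refine tsum_congr fun p => ?_
  simp [HasAntidiagonal.mem_antidiagonal.mp p.2]

theorem tsum_add_eq_tsum_ite (c : ℕ → ℝ≥0∞) (j : ℕ) :
    ∑' t, c (j + t) = ∑' t, if j ≤ t then c t else 0 := by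
  set f : ℕ → ℝ≥0∞ := fun t => if j ≤ t then c t else 0
  have h : HasSum f (∑ i ∈ range j, f i + ∑' t, f (t + j)) :=
    ENNReal.summable.hasSum.sum_range_add
  rw [h.tsum_eq, sum_eq_zero fun i hi => if_neg (by simpa using hi), zero_add]
  exact tsum_congr fun t => by simp [f, add_comm]

/-- The square of the tail sum `∑_{t ≥ j} c t` counts the pair `(t, s)` once for every
`j ≤ min t s`, and `min t s + 1 ≤ √(t + 1) √(s + 1)`. -/
theorem tsum_sq_tsum_add_le (c : ℕ → ℝ≥0∞) :
    ∑' j, (∑' t, c (j + t)) ^ 2 ≤ (∑' t : ℕ, ENNReal.ofReal √((t : ℝ) + 1) * c t) ^ 2 := by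
  have count (m : ℕ) (x : ℝ≥0∞) :
      ∑' j : ℕ, (if j ≤ m then x else 0) = ((m : ℝ≥0∞) + 1) * x := by
    rw [tsum_eq_sum (s := range (m + 1)) fun j hj => if_neg (by simpa [Nat.lt_succ_iff] using hj),
      sum_ite_of_true fun j hj => Nat.lt_succ_iff.mp (mem_range.mp hj), sum_const, card_range,
      nsmul_eq_mul]
    push_cast; rfl
  have min_le (t s : ℕ) : ((min t s : ℕ) : ℝ≥0∞) + 1 ≤
      ENNReal.ofReal √((t : ℝ) + 1) * ENNReal.ofReal √((s : ℝ) + 1) := by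
    have hm : (((min t s : ℕ) : ℝ) + 1) * (((min t s : ℕ) : ℝ) + 1) ≤
        ((t : ℝ) + 1) * ((s : ℝ) + 1) := by
      gcongr <;> exact_mod_cast (by omega)
    rw [← ENNReal.ofReal_mul (Real.sqrt_nonneg _), ← Real.sqrt_mul (by positivity)]
    calc ((min t s : ℕ) : ℝ≥0∞) + 1
        = ENNReal.ofReal √((((min t s : ℕ) : ℝ) + 1) * (((min t s : ℕ) : ℝ) + 1)) := by
          rw [Real.sqrt_mul_self (by positivity)]; norm_cast
      _ ≤ _ := by gcongr
  calc ∑' j, (∑' t, c (j + t)) ^ 2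
      = ∑' j, ∑' t, ∑' s, if j ≤ min t s then c t * c s else 0 := by
        refine tsum_congr fun j => ?_
        rw [tsum_add_eq_tsum_ite, sq, tsum_mul_tsum]
        refine tsum_congr fun t => tsum_congr fun s => ?_
        by_cases ht : j ≤ t <;> by_cases hs : j ≤ s <;> simp [ht, hs]
    _ = ∑' t, ∑' s, ((min t s : ℕ) + 1 : ℝ≥0∞) * (c t * c s) := by
        rw [ENNReal.tsum_comm]
        refine tsum_congr fun t => ?_
        rw [ENNReal.tsum_comm]
        exact tsum_congr fun s => count _ _
    _ ≤ ∑' t : ℕ, ∑' s : ℕ,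
          (ENNReal.ofReal √((t : ℝ) + 1) * c t) * (ENNReal.ofReal √((s : ℝ) + 1) * c s) := by
        refine ENNReal.tsum_le_tsum fun t => ENNReal.tsum_le_tsum fun s => ?_
        rw [mul_mul_mul_comm]
        exact mul_le_mul_left (min_le t s) _
    _ = _ := by rw [sq, tsum_mul_tsum]

theorem natCast_add_one_rpow_neg_half (n : ℕ) :
    ((n : ℝ≥0∞) + 1) ^ (-(1 / 2 : ℝ)) = ENNReal.ofReal (√((n : ℝ) + 1))⁻¹ := by
  have hn : (0 : ℝ) < n + 1 := by positivity
  rw [show ((n : ℝ≥0∞) + 1) = ENNReal.ofReal ((n : ℝ) + 1) by norm_cast,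
    ENNReal.ofReal_rpow_of_pos hn, Real.rpow_neg hn.le, Real.sqrt_eq_rpow]

end ENNReal

theorem Antitone.tsum_sub_add_one {a : ℕ → ℝ≥0∞} (ha : Antitone a)
    (h0 : Tendsto a atTop (𝓝 0)) (k : ℕ) :
    ∑' t, (a (k + t) - a (k + t + 1)) = a k := by
  have partial_sum (J : ℕ) : ∑ t ∈ range J, (a (k + t) - a (k + t + 1)) = a k - a (k + J) := by
    induction J with
    | zero => simp
    | succ J ih =>
      rw [sum_range_succ, ih, tsub_add_tsub_cancel (ha (Nat.le_add_right k J))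
        (ha (Nat.le_succ _))]
      rfl
  have hinf : ⨅ J, a (k + J) = 0 := by
    refine iInf_eq_of_tendsto (fun i j h => ha (by omega)) ?_
    simpa only [Function.comp_def, Nat.add_comm _ k] using h0.comp (tendsto_add_atTop_nat k)
  rw [ENNReal.tsum_eq_iSup_nat, iSup_congr partial_sum, ← ENNReal.sub_iInf, hinf, tsub_zero]

namespace Stechkin

open Real

noncomputable def weight (m : ℝ) : ℝ := 4 / √(m * (m + 4))

theorem weight_nonneg (m : ℝ) : 0 ≤ weight m := by
  unfold weight; positivity

theorem weight_sq {m : ℝ} (hm : 0 < m) : weight m ^ 2 = 4 / m - 4 / (m + 4) := by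
  rw [weight, div_pow, sq_sqrt (by positivity)]
  field_simp
  ring

theorem sum_range_weight_sq_le {x : ℝ} (hx : 0 < x) (J : ℕ) :
    ∑ j ∈ range J, weight (x + 4 * j) ^ 2 ≤ 4 / x := by
  have telescope (j : ℕ) :
      weight (x + 4 * j) ^ 2 = 4 / (x + 4 * j) - 4 / (x + 4 * ↑(j + 1)) := by
    rw [weight_sq (by positivity)]; push_cast; ring_nf
  rw [sum_congr rfl fun j _ => telescope j, sum_range_sub' (fun j : ℕ => 4 / (x + 4 * (j : ℝ)))]
  simp only [Nat.cast_zero, mul_zero, add_zero, sub_le_self_iff]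
  positivity

/-- From `√(m (m + 4)) = √((m + 2)² - 4) ≤ x - 2/x - 2/x³` with `x = m + 2`. -/
theorem div_le_weight {m : ℝ} (hm : 1 ≤ m) :
    4 * (m + 2) ^ 3 / ((m + 2) ^ 4 - 2 * (m + 2) ^ 2 - 2) ≤ weight m := by
  have hx : 9 ≤ (m + 2) ^ 2 := by nlinarith
  set x := m + 2 with hxdef
  have hden : 0 < x ^ 4 - 2 * x ^ 2 - 2 := by nlinarith
  have hs : √(m * (m + 4)) ≤ (x ^ 4 - 2 * x ^ 2 - 2) / x ^ 3 := by
    rw [sqrt_le_left (by positivity), div_pow, le_div_iff₀ (by positivity)]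
    have : m * (m + 4) = x ^ 2 - 4 := by rw [hxdef]; ring
    rw [this]; nlinarith [sq_nonneg x]
  calc 4 * x ^ 3 / (x ^ 4 - 2 * x ^ 2 - 2) = 4 / ((x ^ 4 - 2 * x ^ 2 - 2) / x ^ 3) := by
        field_simp
    _ ≤ weight m := div_le_div_of_nonneg_left (by norm_num) (sqrt_pos.2 (by nlinarith)) hs

/-- The ratio `(m + 7/2)/(m + 1/2)` is bounded by the cubic Taylor polynomial of `exp` at
`3 / √(m (m + 4))`; squared out, `key` is a polynomial inequality with nonnegative
coefficients. -/
theorem log_add_seven_halves_sub_log_le {m : ℝ} (hm : 0 < m) :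
    log (m + 7 / 2) - log (m + 1 / 2) ≤ 3 / 4 * weight m := by
  have hz : 0 < m * (m + 4) := by positivity
  set s := √(m * (m + 4))
  have hs : 0 < s := sqrt_pos.2 hz
  have hs2 : s ^ 2 = m * (m + 4) := sq_sqrt hz.le
  have key : s * (3 * m ^ 2 + 15 / 2 * m - 9 / 4) ≤
      3 * m ^ 3 + 27 / 2 * m ^ 2 + 21 / 2 * m + 9 / 4 :=
    (le_abs_self _).trans <| abs_le_of_sq_le_sq (by rw [mul_pow, hs2]; nlinarith) (by positivity)
  have cubic : (m + 7 / 2) / (m + 1 / 2) ≤ 1 + 3 / s + (3 / s) ^ 2 / 2 + (3 / s) ^ 3 / 6 := by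
    rw [div_le_iff₀ (by positivity)]
    field_simp
    nlinarith [key, hs2, hs]
  have exp_ge : 1 + 3 / s + (3 / s) ^ 2 / 2 + (3 / s) ^ 3 / 6 ≤ exp (3 / s) := by
    have h := sum_le_exp_of_nonneg (x := 3 / s) (by positivity) 4
    norm_num [sum_range_succ, Nat.factorial] at h
    linarith
  have weight_eq : 3 / 4 * weight m = 3 / s := by rw [weight]; ring
  rw [← log_div (by positivity) (by positivity), log_le_iff_le_exp (by positivity), weight_eq]
  exact cubic.trans exp_ge

theorem thirteen_tenths_le_log : 13 / 10 ≤ log (41 / 11) := by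
  have h : log (44 / 41) ≤ 3 / 41 := by
    linarith [log_le_sub_one_of_pos (show (0 : ℝ) < 44 / 41 by norm_num)]
  have e : log (41 / 11) = 2 * log 2 - log (44 / 41) := by
    rw [← log_rpow two_pos, ← log_div (by norm_num) (by norm_num)]; norm_num
  linarith [log_two_gt_d9]

theorem sqrt_three_le_sum_range_weight_of_lt_five {k : ℕ} (hk : 1 ≤ k) (hk5 : k < 5) :
    √3 ≤ ∑ j ∈ range k, weight (k + 3 * j) := by
  refine le_trans ?_ (sum_le_sum fun j _ => div_le_weight (m := k + 3 * j) ?_)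
  · interval_cases k <;> norm_num [sum_range_succ, sqrt_le_left]
  · have : (1 : ℝ) ≤ k := by exact_mod_cast hk
    linarith [(Nat.cast_nonneg j : (0 : ℝ) ≤ j)]

theorem sqrt_three_le_sum_range_weight_of_five_le {k : ℕ} (hk : 5 ≤ k) :
    √3 ≤ ∑ j ∈ range k, weight (k + 3 * j) := by
  have hk' : (5 : ℝ) ≤ k := by exact_mod_cast hk
  set φ : ℕ → ℝ := fun j => log (k + 3 * j + 1 / 2)
  have ratio : 41 / 11 ≤ (4 * k + 1 / 2) / (k + 1 / 2 : ℝ) := by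
    rw [le_div_iff₀ (by linarith)]; linarith
  calc √3 ≤ 4 / 3 * log (41 / 11) := by
        rw [sqrt_le_left (by positivity)]; nlinarith [thirteen_tenths_le_log]
    _ ≤ 4 / 3 * (log (4 * k + 1 / 2) - log (k + 1 / 2)) := by
        rw [← log_div (by positivity) (by positivity)]
        gcongr
    _ = 4 / 3 * (φ k - φ 0) := by simp only [φ]; push_cast; ring_nf
    _ = ∑ j ∈ range k, 4 / 3 * (φ (j + 1) - φ j) := by rw [← mul_sum, sum_range_sub]
    _ ≤ ∑ j ∈ range k, weight (k + 3 * j) := by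
        refine sum_le_sum fun j _ => ?_
        have h := log_add_seven_halves_sub_log_le (m := k + 3 * j) (by positivity)
        simp only [φ]; push_cast
        ring_nf at h ⊢; linarith

theorem sqrt_three_le_sum_range_weight {k : ℕ} (hk : 1 ≤ k) :
    √3 ≤ ∑ j ∈ range k, weight (k + 3 * j) := by
  rcases lt_or_ge k 5 with hk5 | hk5
  · exact sqrt_three_le_sum_range_weight_of_lt_five hk hk5
  · exact sqrt_three_le_sum_range_weight_of_five_le hk5

theorem sum_range_inv_sqrt_le (k : ℕ) : ∑ i ∈ range k, (√((i : ℝ) + 1))⁻¹ ≤ 2 * √k := by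
  induction k with
  | zero => simp
  | succ k ih =>
    rw [sum_range_succ]
    have hu : 0 < √((k : ℝ) + 1) := sqrt_pos.2 (by positivity)
    have hu2 := sq_sqrt (by positivity : (0 : ℝ) ≤ k + 1)
    have hv2 := sq_sqrt (Nat.cast_nonneg k : (0 : ℝ) ≤ k)
    have step : (√((k : ℝ) + 1))⁻¹ ≤ 2 * (√((k : ℝ) + 1) - √k) := by
      rw [inv_le_iff_one_le_mul₀ hu]
      nlinarith [sq_nonneg (√((k : ℝ) + 1) - √k)]
    push_cast
    linarith

theorem sum_antidiagonal_inv_sqrt_mul_sqrt_le (K : ℕ) :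
    ∑ p ∈ antidiagonal K, (√((p.1 : ℝ) + 1))⁻¹ * √((p.2 : ℝ) + 1) ≤ 2 * (K + 1) := by
  calc ∑ p ∈ antidiagonal K, (√((p.1 : ℝ) + 1))⁻¹ * √((p.2 : ℝ) + 1)
      ≤ ∑ p ∈ antidiagonal K, (√((p.1 : ℝ) + 1))⁻¹ * √((K : ℝ) + 1) := by
        gcongr with p hp
        exact_mod_cast HasAntidiagonal.antidiagonal.snd_le hp
    _ = (∑ i ∈ range (K + 1), (√((i : ℝ) + 1))⁻¹) * √((K : ℝ) + 1) := by
        rw [Nat.sum_antidiagonal_eq_sum_range_succ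
          (fun i _ => (√((i : ℝ) + 1))⁻¹ * √((K : ℝ) + 1)), sum_mul]
    _ ≤ 2 * √((K : ℝ) + 1) * √((K : ℝ) + 1) := by
        gcongr
        exact_mod_cast sum_range_inv_sqrt_le (K + 1)
    _ = 2 * (K + 1) := by rw [mul_assoc, mul_self_sqrt (by positivity)]


noncomputable def tailL2 (a : ℕ → ℝ≥0∞) (n : ℕ) : ℝ≥0∞ :=
  (∑' k, a (n + k) ^ (2 : ℝ)) ^ ((1 : ℝ) / 2)

noncomputable def stechkinSum (a : ℕ → ℝ≥0∞) : ℝ≥0∞ :=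
  ∑' n : ℕ, ((n : ℝ≥0∞) + 1) ^ (-(1 / 2 : ℝ)) * tailL2 a n

theorem tsum_weight_rpow_two_le (n : ℕ) :
    ∑' j : ℕ, ENNReal.ofReal (weight (n + 1 + 4 * j)) ^ (2 : ℝ) ≤
      (2 * ((n : ℝ≥0∞) + 1) ^ (-(1 / 2 : ℝ))) ^ (2 : ℝ) := by
  have hn : (0 : ℝ) < n + 1 := by positivity
  have rhs : (2 * ((n : ℝ≥0∞) + 1) ^ (-(1 / 2 : ℝ))) ^ (2 : ℝ) =
      ENNReal.ofReal (4 / (n + 1)) := by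
    rw [ENNReal.natCast_add_one_rpow_neg_half, ENNReal.rpow_two, ← ENNReal.ofReal_ofNat 2,
      ← ENNReal.ofReal_mul (by norm_num), ← ENNReal.ofReal_pow (by positivity), mul_pow, inv_pow,
      Real.sq_sqrt hn.le]
    ring_nf
  rw [rhs]
  refine ENNReal.tsum_le_of_sum_range_le fun J => ?_
  simp_rw [ENNReal.rpow_two, ← ENNReal.ofReal_pow (weight_nonneg _)]
  rw [← ENNReal.ofReal_sum_of_nonneg fun _ _ => sq_nonneg _]
  exact ENNReal.ofReal_le_ofReal (sum_range_weight_sq_le hn J)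

theorem tsum_weight_mul_le (a : ℕ → ℝ≥0∞) (n : ℕ) :
    ∑' j : ℕ, ENNReal.ofReal (weight (n + 1 + 4 * j)) * a (n + j) ≤
      2 * ((n : ℝ≥0∞) + 1) ^ (-(1 / 2 : ℝ)) * tailL2 a n := by
  refine (ENNReal.inner_le_Lp_mul_Lq_tsum Real.HolderConjugate.two_two _ _).trans ?_
  rw [tailL2]
  gcongr
  calc (∑' j : ℕ, ENNReal.ofReal (weight (n + 1 + 4 * j)) ^ (2 : ℝ)) ^ (1 / 2 : ℝ)
      ≤ ((2 * ((n : ℝ≥0∞) + 1) ^ (-(1 / 2 : ℝ))) ^ (2 : ℝ)) ^ (1 / 2 : ℝ) := by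
        gcongr; exact tsum_weight_rpow_two_le n
    _ = 2 * ((n : ℝ≥0∞) + 1) ^ (-(1 / 2 : ℝ)) := by rw [← ENNReal.rpow_mul]; norm_num

theorem ofReal_sqrt_three_le_sum_antidiagonal (K : ℕ) :
    ENNReal.ofReal √3 ≤ ∑ p ∈ antidiagonal K, ENNReal.ofReal (weight (p.1 + 1 + 4 * p.2)) := by
  rw [← ENNReal.ofReal_sum_of_nonneg fun _ _ => weight_nonneg _]
  refine ENNReal.ofReal_le_ofReal ((sqrt_three_le_sum_range_weight K.succ_pos).trans_eq ?_)
  rw [← Nat.sum_antidiagonal_swap, Nat.sum_antidiagonal_eq_sum_range_succ_mk]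
  refine sum_congr rfl fun j hj => ?_
  have hj : j ≤ K := Nat.lt_succ_iff.mp (mem_range.mp hj)
  simp only [Prod.swap, Nat.cast_sub hj]
  push_cast; ring_nf

theorem sqrt_three_mul_tsum_le (a : ℕ → ℝ≥0∞) :
    ENNReal.ofReal √3 * ∑' k, a k ≤ 2 * stechkinSum a := by
  calc ENNReal.ofReal √3 * ∑' k, a k = ∑' K : ℕ, ENNReal.ofReal √3 * a K :=
        ENNReal.tsum_mul_left.symm
    _ ≤ ∑' K : ℕ, (∑ p ∈ antidiagonal K, ENNReal.ofReal (weight (p.1 + 1 + 4 * p.2))) * a K := by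
        gcongr with K; exact ofReal_sqrt_three_le_sum_antidiagonal K
    _ = ∑' n : ℕ, ∑' j : ℕ, ENNReal.ofReal (weight (n + 1 + 4 * j)) * a (n + j) :=
        (ENNReal.tsum_tsum_mul_add_eq_tsum_antidiagonal
          (fun n j => ENNReal.ofReal (weight (n + 1 + 4 * j))) a).symm
    _ ≤ ∑' n : ℕ, 2 * ((n : ℝ≥0∞) + 1) ^ (-(1 / 2 : ℝ)) * tailL2 a n :=
        ENNReal.tsum_le_tsum fun n => tsum_weight_mul_le a n
    _ = 2 * stechkinSum a := by rw [stechkinSum, ← ENNReal.tsum_mul_left]; simp_rw [mul_assoc]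

theorem tailL2_le {a : ℕ → ℝ≥0∞} (ha : Antitone a) (h0 : Tendsto a atTop (𝓝 0)) (n : ℕ) :
    tailL2 a n ≤ ∑' t : ℕ, ENNReal.ofReal √((t : ℝ) + 1) * (a (n + t) - a (n + t + 1)) := by
  have tail (k : ℕ) : a (n + k) = ∑' t, (a (n + (k + t)) - a (n + (k + t) + 1)) := by
    simp_rw [← add_assoc]; exact (ha.tsum_sub_add_one h0 _).symm
  calc tailL2 a n
      = (∑' k, (∑' t, (a (n + (k + t)) - a (n + (k + t) + 1))) ^ 2) ^ ((1 : ℝ) / 2) := by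
        simp_rw [tailL2, ENNReal.rpow_two, ← tail]
    _ ≤ ((∑' t : ℕ, ENNReal.ofReal √((t : ℝ) + 1) * (a (n + t) - a (n + t + 1))) ^ 2) ^
          ((1 : ℝ) / 2) := by
        gcongr
        exact ENNReal.tsum_sq_tsum_add_le fun i => a (n + i) - a (n + i + 1)
    _ = _ := by rw [← ENNReal.rpow_two, ← ENNReal.rpow_mul]; norm_num

theorem sum_antidiagonal_rpow_mul_le (K : ℕ) :
    ∑ p ∈ antidiagonal K, ((p.1 : ℝ≥0∞) + 1) ^ (-(1 / 2 : ℝ)) * ENNReal.ofReal √((p.2 : ℝ) + 1) ≤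
      2 * ((K : ℝ≥0∞) + 1) := by
  simp_rw [ENNReal.natCast_add_one_rpow_neg_half,
    ← ENNReal.ofReal_mul (inv_nonneg.2 (Real.sqrt_nonneg _))]
  rw [← ENNReal.ofReal_sum_of_nonneg fun _ _ => by positivity]
  calc _ ≤ ENNReal.ofReal (2 * (K + 1)) :=
        ENNReal.ofReal_le_ofReal (sum_antidiagonal_inv_sqrt_mul_sqrt_le K)
    _ = 2 * ((K : ℝ≥0∞) + 1) := by norm_cast

theorem stechkinSum_le {a : ℕ → ℝ≥0∞} (ha : Antitone a) : stechkinSum a ≤ 2 * ∑' k, a k := by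
  by_cases hfin : ∑' k, a k = ∞
  · rw [hfin, ENNReal.mul_top two_ne_zero]; exact le_top
  have h0 := ENNReal.tendsto_atTop_zero_of_tsum_ne_top hfin
  set c : ℕ → ℝ≥0∞ := fun i => a i - a (i + 1)
  calc stechkinSum a
      ≤ ∑' n : ℕ, ((n : ℝ≥0∞) + 1) ^ (-(1 / 2 : ℝ)) *
          ∑' t : ℕ, ENNReal.ofReal √((t : ℝ) + 1) * c (n + t) := by
        refine ENNReal.tsum_le_tsum fun n => ?_
        gcongr
        exact tailL2_le ha h0 n
    _ = ∑' n : ℕ, ∑' t : ℕ, (((n : ℝ≥0∞) + 1) ^ (-(1 / 2 : ℝ)) *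
          ENNReal.ofReal √((t : ℝ) + 1)) * c (n + t) := by
        simp_rw [← ENNReal.tsum_mul_left, mul_assoc]
    _ = ∑' K : ℕ, (∑ p ∈ antidiagonal K, ((p.1 : ℝ≥0∞) + 1) ^ (-(1 / 2 : ℝ)) *
          ENNReal.ofReal √((p.2 : ℝ) + 1)) * c K :=
        ENNReal.tsum_tsum_mul_add_eq_tsum_antidiagonal _ _
    _ ≤ ∑' K : ℕ, (2 * ((K : ℝ≥0∞) + 1)) * c K := by
        gcongr with K; exact sum_antidiagonal_rpow_mul_le K
    _ = ∑' K : ℕ, (2 * ∑ _p ∈ antidiagonal K, (1 : ℝ≥0∞)) * c K := by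
        simp [Nat.card_antidiagonal]
    _ = 2 * ∑' k : ℕ, ∑' t : ℕ, 1 * c (k + t) := by
        rw [ENNReal.tsum_tsum_mul_add_eq_tsum_antidiagonal (fun _ _ => 1),
          ← ENNReal.tsum_mul_left]
        simp_rw [mul_assoc]
    _ = 2 * ∑' k, a k := by simp_rw [one_mul, c, ha.tsum_sub_add_one h0]

end Stechkin

/-- Stechkin's lemma: for a non-increasing sequence of nonnegative (extended real) numbers
`a_1 ≥ a_2 ≥ ⋯` (here `a n` stands for `a_{n+1}`),
`(1/2) ∑_{n=1}^∞ n^{-1/2} (∑_{k=n}^∞ a_k^2)^{1/2} ≤ ∑_{k=1}^∞ a_k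
  ≤ (2/√3) ∑_{n=1}^∞ n^{-1/2} (∑_{k=n}^∞ a_k^2)^{1/2}`,
where both sides may simultaneously be infinite. -/
theorem stmt2 (a : ℕ → ℝ≥0∞) (ha : Antitone a) :
    (1 / 2) * (∑' n : ℕ, ((n : ℝ≥0∞) + 1) ^ (-(1 / 2 : ℝ)) *
        (∑' k : ℕ, a (n + k) ^ (2 : ℝ)) ^ ((1 : ℝ) / 2)) ≤ ∑' k : ℕ, a k ∧
    (∑' k : ℕ, a k) ≤ ENNReal.ofReal (2 / Real.sqrt 3) *
      (∑' n : ℕ, ((n : ℝ≥0∞) + 1) ^ (-(1 / 2 : ℝ)) *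
        (∑' k : ℕ, a (n + k) ^ (2 : ℝ)) ^ ((1 : ℝ) / 2)) := by
  refine ⟨?_, ?_⟩
  · calc 1 / 2 * Stechkin.stechkinSum a ≤ 1 / 2 * (2 * ∑' k, a k) := by
          gcongr; exact Stechkin.stechkinSum_le ha
      _ = ∑' k, a k := by
          rw [← mul_assoc, one_div, ENNReal.inv_mul_cancel two_ne_zero ENNReal.ofNat_ne_top,
            one_mul]
  · have hs : (0 : ℝ) < √3 := by positivity
    calc ∑' k, a k = ENNReal.ofReal (1 / √3) * (ENNReal.ofReal √3 * ∑' k, a k) := by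
          rw [← mul_assoc, ← ENNReal.ofReal_mul (by positivity), one_div_mul_cancel hs.ne',
            ENNReal.ofReal_one, one_mul]
      _ ≤ ENNReal.ofReal (1 / √3) * (2 * Stechkin.stechkinSum a) :=
          mul_le_mul' le_rfl (Stechkin.sqrt_three_mul_tsum_le a)
      _ = ENNReal.ofReal (2 / √3) * Stechkin.stechkinSum a := by
          rw [← mul_assoc, ← ENNReal.ofReal_ofNat 2, ← ENNReal.ofReal_mul (by positivity)]
          ring_nf
end

section
/- (Rudin–Shapiro polynomials) For any natural number N there exist signs ε_k ∈ {−1, +1}, |k| ≤ N, such that the trigonometric polynomial ℛ_N(x) = ∑_{|k| ≤ N} ε_k e^{ikx} satisfies ‖ℛ_N‖_∞ ≤ C N^{1/2} with an absolute constant C. -/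
/-!
The Rudin–Shapiro pairs `P₀ = Q₀ = 1`, `Pₙ₊₁ = Pₙ + z^{2ⁿ} Qₙ`, `Qₙ₊₁ = Pₙ - z^{2ⁿ} Qₙ` have
`2ⁿ` sign coefficients, and the parallelogram law gives `|Pₙ|² + |Qₙ|² = 2ⁿ⁺¹` on the unit circle,
so `|Pₙ| ≤ √(2 · 2ⁿ)`. For an arbitrary length `m`, write `m = 2ⁿ + r` with `r < 2ⁿ` and append
a sign sequence of length `r` (obtained by induction) to the coefficients of `Pₙ`; since `r ≤ m / 2`
the bound `6 √m` propagates. Finally a symmetric sum over `|k| ≤ N` is `z^{-N}` times a sum of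
length `2N + 1`.
-/

open Finset Complex

namespace RudinShapiro

def IsSign (a : ℕ → ℝ) : Prop := ∀ k, a k = 1 ∨ a k = -1

def seqAppend {α : Type*} (a b : ℕ → α) (L : ℕ) (k : ℕ) : α :=
  if k < L then a k else b (k - L)

noncomputable def partialSum (a : ℕ → ℝ) (m : ℕ) (z : ℂ) : ℂ :=
  ∑ k ∈ range m, (a k : ℂ) * z ^ k

lemma IsSign.one : IsSign 1 := fun _ => Or.inl rfl

lemma IsSign.neg {a : ℕ → ℝ} (ha : IsSign a) : IsSign (-a) := fun k => by
  rcases ha k with h | h <;> simp [h]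

lemma IsSign.seqAppend {a b : ℕ → ℝ} (ha : IsSign a) (hb : IsSign b) (L : ℕ) :
    IsSign (seqAppend a b L) := fun k => by
  unfold RudinShapiro.seqAppend
  split_ifs
  exacts [ha k, hb _]

lemma partialSum_neg (a : ℕ → ℝ) (m : ℕ) (z : ℂ) : partialSum (-a) m z = -partialSum a m z := by
  simp [partialSum]

lemma partialSum_seqAppend (a b : ℕ → ℝ) (L r : ℕ) (z : ℂ) :
    partialSum (seqAppend a b L) (L + r) z = partialSum a L z + z ^ L * partialSum b r z := by
  rw [partialSum, sum_range_add, partialSum, partialSum, mul_sum]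
  congr 1
  · exact sum_congr rfl fun k hk => by simp [seqAppend, mem_range.mp hk]
  · refine sum_congr rfl fun j _ => ?_
    simp only [seqAppend, show ¬L + j < L by omega, if_false, Nat.add_sub_cancel_left, pow_add]
    ring

def rudinShapiro : ℕ → (ℕ → ℝ) × (ℕ → ℝ)
  | 0 => (1, 1)
  | n + 1 => (seqAppend (rudinShapiro n).1 (rudinShapiro n).2 (2 ^ n),
      seqAppend (rudinShapiro n).1 (-(rudinShapiro n).2) (2 ^ n))

lemma isSign_rudinShapiro (n : ℕ) : IsSign (rudinShapiro n).1 ∧ IsSign (rudinShapiro n).2 := by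
  induction n with
  | zero => exact ⟨IsSign.one, IsSign.one⟩
  | succ n ih => exact ⟨ih.1.seqAppend ih.2 _, ih.1.seqAppend ih.2.neg _⟩

lemma norm_sq_add_norm_sq_rudinShapiro (n : ℕ) {z : ℂ} (hz : ‖z‖ = 1) :
    ‖partialSum (rudinShapiro n).1 (2 ^ n) z‖ ^ 2 + ‖partialSum (rudinShapiro n).2 (2 ^ n) z‖ ^ 2
      = 2 ^ (n + 1) := by
  induction n with
  | zero => simp [partialSum, rudinShapiro]; norm_num
  | succ n ih =>
    have h := parallelogram_law_with_norm ℝ (partialSum (rudinShapiro n).1 (2 ^ n) z)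
      (z ^ 2 ^ n * partialSum (rudinShapiro n).2 (2 ^ n) z)
    rw [norm_mul, norm_pow, hz, one_pow, one_mul, ih] at h
    rw [rudinShapiro, pow_succ 2 n, mul_two, partialSum_seqAppend, partialSum_seqAppend,
      partialSum_neg, mul_neg, ← sub_eq_add_neg, h]
    ring

lemma norm_partialSum_rudinShapiro_le (n : ℕ) {z : ℂ} (hz : ‖z‖ = 1) :
    ‖partialSum (rudinShapiro n).1 (2 ^ n) z‖ ≤ √(2 * 2 ^ n) := by
  refine Real.le_sqrt_of_sq_le ?_
  linarith [norm_sq_add_norm_sq_rudinShapiro n hz, pow_succ (2 : ℝ) n,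
    sq_nonneg ‖partialSum (rudinShapiro n).2 (2 ^ n) z‖]

lemma sqrt_two_mul_add_six_mul_sqrt_le {a r : ℝ} (hr : 0 ≤ r) (h : r ≤ a) :
    √(2 * a) + 6 * √r ≤ 6 * √(a + r) := by
  have h₁ : √(2 * a) ≤ √2 * √(a + r) := by
    rw [← Real.sqrt_mul zero_le_two]; exact Real.sqrt_le_sqrt (by linarith)
  have h₂ : √2 * √r ≤ √(a + r) := by
    rw [← Real.sqrt_mul zero_le_two]; exact Real.sqrt_le_sqrt (by linarith)
  have h₃ : √2 ^ 2 = 2 := Real.sq_sqrt zero_le_two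
  nlinarith [Real.sqrt_nonneg 2, Real.sqrt_nonneg r, Real.sqrt_nonneg (a + r),
    sq_nonneg (√2 - 3 / 2)]

theorem exists_isSign_norm_partialSum_le (m : ℕ) :
    ∃ a : ℕ → ℝ, IsSign a ∧ ∀ z : ℂ, ‖z‖ = 1 → ‖partialSum a m z‖ ≤ 6 * √m := by
  induction m using Nat.strong_induction_on with
  | _ m ih =>
    rcases Nat.eq_zero_or_pos m with rfl | hm
    · exact ⟨1, IsSign.one, fun z _ => by simp [partialSum]⟩
    obtain ⟨n, h_le, h_lt⟩ : ∃ n, 2 ^ n ≤ m ∧ m < 2 ^ (n + 1) :=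
      ⟨Nat.log 2 m, Nat.pow_log_le_self 2 hm.ne', Nat.lt_pow_succ_log_self one_lt_two m⟩
    obtain ⟨b, hb, hb_le⟩ := ih (m - 2 ^ n) (by omega)
    refine ⟨seqAppend (rudinShapiro n).1 b (2 ^ n), (isSign_rudinShapiro n).1.seqAppend hb _,
      fun z hz => ?_⟩
    obtain ⟨r, rfl⟩ : ∃ r, m = 2 ^ n + r := ⟨m - 2 ^ n, by omega⟩
    rw [partialSum_seqAppend, Nat.add_sub_cancel_left] at *
    calc _ ≤ ‖partialSum (rudinShapiro n).1 (2 ^ n) z‖ + ‖z ^ 2 ^ n * partialSum b r z‖ :=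
          norm_add_le _ _
      _ ≤ √(2 * 2 ^ n) + 6 * √r := by
          rw [norm_mul, norm_pow, hz, one_pow, one_mul]
          exact add_le_add (norm_partialSum_rudinShapiro_le n hz) (hb_le z hz)
      _ ≤ 6 * √(2 ^ n + r : ℕ) := by
          push_cast
          exact sqrt_two_mul_add_six_mul_sqrt_le r.cast_nonneg
            (by exact_mod_cast (by omega : r ≤ 2 ^ n))

lemma sum_Icc_neg_eq_sum_range {M : Type*} [AddCommMonoid M] (N : ℕ) (f : ℤ → M) :
    ∑ k ∈ Icc (-(N : ℤ)) N, f k = ∑ j ∈ range (2 * N + 1), f (j - N) :=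
  sum_nbij' (fun k => (k + N).toNat) (fun j => (j : ℤ) - N)
    (fun k hk => by simp only [mem_Icc, mem_range] at *; omega)
    (fun j hj => by simp only [mem_Icc, mem_range] at *; omega)
    (fun k hk => by simp only [mem_Icc] at hk; omega) (fun j _ => by omega)
    (fun k hk => by simp only [mem_Icc] at hk; congr; omega)

lemma sqrt_two_mul_add_one_le {N : ℕ} (hN : 1 ≤ N) : √(2 * N + 1 : ℕ) ≤ 2 * √N := by
  rw [show (2 : ℝ) * √N = √(4 * N) by rw [Real.sqrt_mul' _ N.cast_nonneg]; norm_num]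
  exact Real.sqrt_le_sqrt (by push_cast; linarith [(Nat.one_le_cast (α := ℝ)).mpr hN])

end RudinShapiro

open RudinShapiro in
/-- Rudin–Shapiro polynomials: there is an absolute constant `C` such that for any
natural number `N ≥ 1` there exist signs `ε_k ∈ {-1, +1}`, `|k| ≤ N`, with
`‖∑_{|k| ≤ N} ε_k e^{ikx}‖_∞ ≤ C N^{1/2}`. -/
theorem stmt11 : ∃ C : ℝ, 0 < C ∧ ∀ N : ℕ, 1 ≤ N →
    ∃ ε : ℤ → ℝ, (∀ k : ℤ, |k| ≤ (N : ℤ) → ε k = 1 ∨ ε k = -1) ∧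
      ∀ x : ℝ, ‖(∑ k ∈ Finset.Icc (-(N : ℤ)) (N : ℤ),
          (ε k : ℂ) * Complex.exp ((k : ℂ) * (x : ℂ) * Complex.I))‖ ≤
        C * Real.sqrt N := by
  refine ⟨12, by norm_num, fun N hN => ?_⟩
  obtain ⟨a, ha, ha_le⟩ := exists_isSign_norm_partialSum_le (2 * N + 1)
  refine ⟨fun k => a (k + N).toNat, fun k _ => ha _, fun x => ?_⟩
  set z := exp (x * I)
  have hz : ‖z‖ = 1 := norm_exp_ofReal_mul_I x
  have h_shift : ∑ k ∈ Icc (-(N : ℤ)) N, (a (k + N).toNat : ℂ) * exp (k * x * I)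
      = z ^ (-(N : ℤ)) * partialSum a (2 * N + 1) z := by
    rw [sum_Icc_neg_eq_sum_range, partialSum, mul_sum]
    refine sum_congr rfl fun j _ => ?_
    have hz0 : z ≠ 0 := exp_ne_zero _
    rw [show ((j : ℤ) - N + N).toNat = j by omega, mul_assoc _ (x : ℂ), exp_int_mul,
      sub_eq_neg_add, zpow_add₀ hz0, zpow_natCast]
    ring
  rw [h_shift, norm_mul, norm_zpow, hz, one_zpow, one_mul]
  linarith [ha_le z hz, sqrt_two_mul_add_one_le hN]
end

section
/- The cardinality of the hyperbolic cross Γ(N) := {k ∈ ℤ^d : ∏_{j=1}^d max{|k_j|, 1} ≤ N} satisfies |Γ(N)| ≍ N (log N)^{d-1} for N ≥ 2, with constants depending only on d. -/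
/-!
Let `P_d(N)` be the part of the hyperbolic cross with positive coordinates. Every point of `Γ(N)`
is, coordinatewise, a sign in `{1, 0, -1}` times a point of `P_d(N)`, so
`|P_d(N)| ≤ |Γ(N)| ≤ 3^d |P_d(N)|`. Fixing the first coordinate `m` gives the recursion
`|P_{d+1}(N)| = ∑_{m ≤ N} |P_d(⌊N/m⌋)|`. Since `⌊N/m⌋ ≤ N/m`, the harmonic bound
`H_N ≤ 1 + log N` yields `|P_{d+1}(N)| ≤ N (1 + log N)^d` by induction. For the lower bound keep
only `m ≤ s = ⌊√N⌋`: there `⌊N/m⌋ ≥ N/(2m)` and `⌊N/m⌋ ≥ s`, and `log(s+1) ≥ log(N+1)/2`, so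
`H_s ≥ log(s+1)` gives `|P_{d+1}(N)| ≥ c_d N log(N+1)^d`.
-/

open Finset Real

def posHyperbolicCross (d N : ℕ) : Finset (Fin d → ℕ) :=
  (Fintype.piFinset fun _ : Fin d => Icc 1 N).filter fun k => ∏ j, k j ≤ N

theorem mem_posHyperbolicCross {d N : ℕ} {k : Fin d → ℕ} :
    k ∈ posHyperbolicCross d N ↔ (∀ j, 1 ≤ k j) ∧ ∏ j, k j ≤ N := by
  simp only [posHyperbolicCross, mem_filter, Fintype.mem_piFinset, mem_Icc, forall_and]
  exact ⟨fun ⟨⟨h1, _⟩, h⟩ => ⟨h1, h⟩, fun ⟨h1, h⟩ =>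
    ⟨⟨h1, fun j => (single_le_prod' (fun i _ => h1 i) (mem_univ j)).trans h⟩, h⟩⟩

theorem cons_mem_posHyperbolicCross_succ {d N m : ℕ} {k : Fin d → ℕ} :
    Fin.cons m k ∈ posHyperbolicCross (d + 1) N ↔ 1 ≤ m ∧ k ∈ posHyperbolicCross d (N / m) := by
  simp only [mem_posHyperbolicCross, Fin.forall_fin_succ, Fin.prod_univ_succ, Fin.cons_zero,
    Fin.cons_succ, and_assoc]
  refine and_congr_right fun hm => and_congr_right fun _ => ?_
  rw [Nat.le_div_iff_mul_le hm, mul_comm]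

theorem card_posHyperbolicCross_succ (d N : ℕ) :
    #(posHyperbolicCross (d + 1) N) = ∑ m ∈ Icc 1 N, #(posHyperbolicCross d (N / m)) := by
  rw [card_eq_sum_card_fiberwise (f := fun k => k 0) (t := Icc 1 N)]
  · refine sum_congr rfl fun m hm => card_nbij' Fin.tail (fun k => Fin.cons m k) ?_ ?_ ?_ ?_
    · intro k hk
      rw [mem_coe, mem_filter] at hk
      obtain ⟨hk, rfl⟩ := hk
      rw [← Fin.cons_self_tail k, cons_mem_posHyperbolicCross_succ] at hk
      exact hk.2
    · intro k hk
      exact mem_filter.2 ⟨cons_mem_posHyperbolicCross_succ.2 ⟨(mem_Icc.1 hm).1, hk⟩, rfl⟩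
    · intro k hk
      obtain ⟨-, rfl⟩ := mem_filter.1 hk
      exact Fin.cons_self_tail k
    · intro k _
      exact Fin.tail_cons _ _
  · intro k hk
    obtain ⟨h1, h⟩ := mem_posHyperbolicCross.1 hk
    exact mem_Icc.2 ⟨h1 0, (single_le_prod' (fun i _ => h1 i) (mem_univ 0)).trans h⟩

theorem one_le_card_posHyperbolicCross {d N : ℕ} (hN : 1 ≤ N) :
    1 ≤ #(posHyperbolicCross d N) :=
  card_pos.2 ⟨fun _ => 1, mem_posHyperbolicCross.2 ⟨fun _ => le_rfl, by simpa using hN⟩⟩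

theorem card_posHyperbolicCross_one (N : ℕ) : #(posHyperbolicCross 1 N) = N := by
  rw [card_posHyperbolicCross_succ]
  calc ∑ m ∈ Icc 1 N, #(posHyperbolicCross 0 (N / m)) = ∑ m ∈ Icc 1 N, 1 := by
        refine sum_congr rfl fun m hm => le_antisymm (card_le_one_of_subsingleton _) ?_
        obtain ⟨hm1, hmN⟩ := mem_Icc.1 hm
        exact one_le_card_posHyperbolicCross ((Nat.one_le_div_iff hm1).2 hmN)
    _ = N := by simp

theorem log_natCast_le_log_natCast {m n : ℕ} (h : m ≤ n) : log m ≤ log n := by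
  rcases m.eq_zero_or_pos with rfl | hm
  · simpa using log_natCast_nonneg n
  · exact log_le_log (by exact_mod_cast hm) (by exact_mod_cast h)

theorem one_add_log_le_three_mul_log {x : ℝ} (hx : 2 ≤ x) : 1 + log x ≤ 3 * log x := by
  have := log_le_log two_pos hx
  linarith [log_two_gt_d9]

theorem div_two_mul_le_natCast_div {m N : ℕ} (hm : m ≤ N) : (N : ℝ) / (2 * m) ≤ (N / m : ℕ) := by
  rcases m.eq_zero_or_pos with rfl | hm0
  · simp
  have hq : 1 ≤ N / m := (Nat.one_le_div_iff hm0).2 hm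
  have h : N ≤ 2 * m * (N / m) := by nlinarith [Nat.lt_mul_div_succ N hm0]
  rw [div_le_iff₀ (by positivity)]
  exact_mod_cast (by linarith : N ≤ (N / m) * (2 * m))

theorem card_posHyperbolicCross_succ_le (d N : ℕ) :
    (#(posHyperbolicCross (d + 1) N) : ℝ) ≤ N * (1 + log N) ^ d := by
  induction d generalizing N with
  | zero => simp [card_posHyperbolicCross_one]
  | succ d ih =>
    rw [card_posHyperbolicCross_succ, Nat.cast_sum]
    calc ∑ m ∈ Icc 1 N, (#(posHyperbolicCross (d + 1) (N / m)) : ℝ)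
        ≤ ∑ m ∈ Icc 1 N, N * (1 + log N) ^ d * (m : ℝ)⁻¹ := by
          refine sum_le_sum fun m _ => (ih _).trans ?_
          calc ((N / m : ℕ) : ℝ) * (1 + log (N / m : ℕ)) ^ d ≤ (N / m : ℝ) * (1 + log N) ^ d := by
                gcongr ?_ * (1 + ?_) ^ d
                · exact Nat.cast_div_le
                · exact log_natCast_le_log_natCast (Nat.div_le_self N m)
            _ = N * (1 + log N) ^ d * (m : ℝ)⁻¹ := by ring
      _ = N * (1 + log N) ^ d * harmonic N := by
          rw [← mul_sum, harmonic_eq_sum_Icc]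
          push_cast
          rfl
      _ ≤ N * (1 + log N) ^ d * (1 + log N) := by gcongr; exact harmonic_le_one_add_log N
      _ = N * (1 + log N) ^ (d + 1) := by ring

theorem exists_mul_log_add_one_pow_le_card_posHyperbolicCross (d : ℕ) :
    ∃ c > 0, ∀ N : ℕ, c * N * log (N + 1 : ℕ) ^ d ≤ #(posHyperbolicCross (d + 1) N) := by
  induction d with
  | zero => exact ⟨1, one_pos, fun N => by simp [card_posHyperbolicCross_one]⟩
  | succ d ih =>
    obtain ⟨c, hc, H⟩ := ih
    refine ⟨c / 2 ^ (d + 2), by positivity, fun N => ?_⟩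
    set s := Nat.sqrt N
    have hlog : log (N + 1 : ℕ) ≤ 2 * log (s + 1 : ℕ) := by
      rw [← Nat.cast_two, ← log_pow, ← Nat.cast_pow]
      exact log_natCast_le_log_natCast (Nat.lt_succ_sqrt' N)
    have hterm : ∀ m ∈ Icc 1 s,
        c * (N / (2 * m)) * log (s + 1 : ℕ) ^ d ≤ #(posHyperbolicCross (d + 1) (N / m)) := by
      intro m hm
      have hms : m ≤ s := (mem_Icc.1 hm).2
      have hsq : s ≤ N / m := (Nat.le_div_iff_mul_le (mem_Icc.1 hm).1).2
        ((Nat.mul_le_mul_left s hms).trans (by simpa [sq] using Nat.sqrt_le' N))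
      refine le_trans ?_ (H (N / m))
      gcongr c * ?_ * log (?_ + 1 : ℕ) ^ d
      exact div_two_mul_le_natCast_div (hms.trans (Nat.sqrt_le_self N))
    calc c / 2 ^ (d + 2) * N * log (N + 1 : ℕ) ^ (d + 1)
        ≤ c / 2 ^ (d + 2) * N * (2 * log (s + 1 : ℕ)) ^ (d + 1) := by gcongr
      _ = c * N / 2 * log (s + 1 : ℕ) ^ d * log (s + 1 : ℕ) := by
          field_simp
          ring
      _ ≤ c * N / 2 * log (s + 1 : ℕ) ^ d * harmonic s := by
          gcongr
          exact log_add_one_le_harmonic s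
      _ = ∑ m ∈ Icc 1 s, c * (N / (2 * m)) * log (s + 1 : ℕ) ^ d := by
          rw [harmonic_eq_sum_Icc, Rat.cast_sum, mul_sum]
          refine sum_congr rfl fun m _ => ?_
          push_cast
          ring
      _ ≤ ∑ m ∈ Icc 1 s, (#(posHyperbolicCross (d + 1) (N / m)) : ℝ) := sum_le_sum hterm
      _ ≤ ∑ m ∈ Icc 1 N, (#(posHyperbolicCross (d + 1) (N / m)) : ℝ) :=
          sum_le_sum_of_subset_of_nonneg (Icc_subset_Icc_right (Nat.sqrt_le_self N))
            fun _ _ _ => by positivity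
      _ = #(posHyperbolicCross (d + 2) N) := by
          rw [card_posHyperbolicCross_succ, Nat.cast_sum]

noncomputable def hyperbolicCross (d N : ℕ) : Finset (Fin d → ℤ) :=
  (Fintype.piFinset fun _ : Fin d => Icc (-(N : ℤ)) N).filter fun k => ∏ j, max |k j| 1 ≤ (N : ℤ)

theorem card_posHyperbolicCross_le_card_hyperbolicCross (d N : ℕ) :
    #(posHyperbolicCross d N) ≤ #(hyperbolicCross d N) := by
  refine card_le_card_of_injOn (fun k j => (k j : ℤ)) (fun k hk => ?_)
    fun k _ k' _ h => funext fun j => Int.ofNat_inj.1 (congrFun h j)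
  simp only [posHyperbolicCross, coe_filter, Fintype.mem_piFinset, mem_Icc] at hk
  obtain ⟨hbox, hprod⟩ := hk
  have hmax (j : Fin d) : max |(k j : ℤ)| 1 = k j := by
    rw [Nat.abs_cast, max_eq_left (by exact_mod_cast (hbox j).1)]
  simp only [hyperbolicCross, coe_filter, Fintype.mem_piFinset, mem_Icc, Set.mem_ofPred_eq, hmax]
  exact ⟨fun j => ⟨by omega, by exact_mod_cast (hbox j).2⟩, by exact_mod_cast hprod⟩

theorem sign_mul_max_abs_one (a : ℤ) : a.sign * max |a| 1 = a := by
  rcases lt_trichotomy a 0 with h | rfl | h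
  · rw [Int.sign_eq_neg_one_of_neg h, abs_of_neg h, max_eq_left (by omega)]; ring
  · simp
  · rw [Int.sign_eq_one_of_pos h, abs_of_pos h, max_eq_left (by omega)]; ring

theorem card_hyperbolicCross_le (d N : ℕ) :
    #(hyperbolicCross d N) ≤ 3 ^ d * #(posHyperbolicCross d N) := by
  set signs := Fintype.piFinset fun _ : Fin d => ({1, 0, -1} : Finset ℤ)
  set f : (Fin d → ℤ) × (Fin d → ℕ) → Fin d → ℤ := fun p j => p.1 j * p.2 j
  have hsub : hyperbolicCross d N ⊆ (signs ×ˢ posHyperbolicCross d N).image f := by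
    intro k hk
    simp only [hyperbolicCross, mem_filter] at hk
    refine mem_image.2 ⟨(fun j => (k j).sign, fun j => (max |k j| 1).toNat),
      mem_product.2 ⟨?_, ?_⟩, ?_⟩
    · simp only [signs, Fintype.mem_piFinset, mem_insert, mem_singleton]
      exact fun j => Int.sign_trichotomy _
    · rw [mem_posHyperbolicCross]
      refine ⟨fun j => by simp, ?_⟩
      rw [← Nat.cast_le (α := ℤ), Nat.cast_prod]
      simpa only [Int.toNat_of_nonneg (by positivity : (0 : ℤ) ≤ max |_| 1)] using hk.2
    · funext j
      simp only [f]
      rw [Int.toNat_of_nonneg (by positivity), sign_mul_max_abs_one]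
  calc #(hyperbolicCross d N) ≤ #((signs ×ˢ posHyperbolicCross d N).image f) := card_le_card hsub
    _ ≤ #(signs ×ˢ posHyperbolicCross d N) := card_image_le
    _ = 3 ^ d * #(posHyperbolicCross d N) := by
        rw [card_product, Fintype.card_piFinset, prod_const, card_univ, Fintype.card_fin]
        rfl

/-- The cardinality of the hyperbolic cross
`Γ(N) = {k ∈ ℤ^d : ∏_j max{|k_j|,1} ≤ N}` satisfies
`|Γ(N)| ≍ N (log N)^{d-1}` for `N ≥ 2`, with constants depending only on `d`. -/
theorem stmt12 (d : ℕ) (hd : 1 ≤ d) :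
    ∃ c C : ℝ, 0 < c ∧ 0 < C ∧ ∀ N : ℕ, 2 ≤ N →
      c * N * Real.log N ^ (d - 1) ≤
        (((Fintype.piFinset fun _ : Fin d => Finset.Icc (-(N : ℤ)) (N : ℤ)).filter
            fun k => (∏ j, max |k j| 1) ≤ (N : ℤ)).card : ℝ) ∧
      (((Fintype.piFinset fun _ : Fin d => Finset.Icc (-(N : ℤ)) (N : ℤ)).filter
            fun k => (∏ j, max |k j| 1) ≤ (N : ℤ)).card : ℝ) ≤
        C * N * Real.log N ^ (d - 1) := by
  obtain ⟨e, rfl⟩ : ∃ e, d = e + 1 := ⟨d - 1, by omega⟩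
  obtain ⟨c, hc, hlower⟩ := exists_mul_log_add_one_pow_le_card_posHyperbolicCross e
  refine ⟨c, 3 ^ (e + 1) * 3 ^ e, hc, by positivity, fun N hN => ?_⟩
  change c * N * log N ^ e ≤ #(hyperbolicCross (e + 1) N) ∧
    (#(hyperbolicCross (e + 1) N) : ℝ) ≤ 3 ^ (e + 1) * 3 ^ e * N * log N ^ e
  have hN2 : (2 : ℝ) ≤ N := by exact_mod_cast hN
  constructor
  · calc c * N * log N ^ e ≤ c * N * log (N + 1 : ℕ) ^ e := by
          gcongr
          exact N.le_succ
      _ ≤ #(posHyperbolicCross (e + 1) N) := hlower N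
      _ ≤ #(hyperbolicCross (e + 1) N) := by
          exact_mod_cast card_posHyperbolicCross_le_card_hyperbolicCross _ _
  · calc (#(hyperbolicCross (e + 1) N) : ℝ) ≤ 3 ^ (e + 1) * #(posHyperbolicCross (e + 1) N) := by
          exact_mod_cast card_hyperbolicCross_le _ _
      _ ≤ 3 ^ (e + 1) * (N * (1 + log N) ^ e) := by
          gcongr
          exact card_posHyperbolicCross_succ_le e N
      _ ≤ 3 ^ (e + 1) * (N * (3 * log N) ^ e) := by
          gcongr
          exact one_add_log_le_three_mul_log hN2
      _ = 3 ^ (e + 1) * 3 ^ e * N * log N ^ e := by ring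
end

section
/- For the modified hyperbolic cross Γ̃(N, d) := {k ∈ ℤ^d : ∏_{j=1}^d (1 + |k_j|) ≤ N}, one has the dimension-explicit cardinality bound |Γ̃(N, d)| ≤ e^2 N^{2 + log_2 d} for all N ∈ ℕ and d ≥ 1. -/
/-!
Rankin's trick. Give `m ∈ ℤ` the weight `w(m) = (1 + |m|)⁻² · d^{-[m ≠ 0]}`. A point `k` of
the cross has `∏ (1 + |kⱼ|) ≤ N`, hence at most `log₂ N` nonzero coordinates, so
`1 ≤ N² d^{log₂ N} ∏ w(kⱼ)`. Summing over the whole box `[-N, N]^d` bounds the cardinality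
by `N² d^{log₂ N} (∑ w)^d`, and `∑ w ≤ 1 + 2/d` by telescoping, so `(∑ w)^d ≤ e²`;
finally `d^{log₂ N} ≤ N^{log₂ d}`.
-/

open Finset Real

theorem one_add_div_pow_le_exp {x : ℝ} (hx : 0 ≤ x) (n : ℕ) : (1 + x / n) ^ n ≤ exp x := by
  rcases eq_or_ne n 0 with rfl | hn
  · simpa using one_le_exp hx
  calc (1 + x / n) ^ n ≤ exp (x / n) ^ n := by
        gcongr
        linarith [add_one_le_exp (x / n)]
    _ = exp x := by rw [← exp_nat_mul, mul_div_cancel₀ _ (by exact_mod_cast hn)]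

theorem pow_log_le_rpow_logb {b N : ℕ} (hb : 1 < b) (hN : N ≠ 0) {x : ℝ} (hx : 1 ≤ x) :
    x ^ Nat.log b N ≤ (N : ℝ) ^ logb b x := by
  have hb' : (1 : ℝ) < b := by exact_mod_cast hb
  have hN' : (0 : ℝ) < N := by positivity
  have hlog : (Nat.log b N : ℝ) ≤ logb b N := by
    rw [le_logb_iff_rpow_le hb' hN', rpow_natCast]
    exact_mod_cast Nat.pow_log_le_self b hN
  have hswap : (N : ℝ) ^ logb b x = x ^ logb b N := by
    rw [rpow_def_of_pos hN', rpow_def_of_pos (by linarith), logb, logb]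
    congr 1
    ring
  rw [hswap, ← rpow_natCast]
  exact rpow_le_rpow_of_exponent_le hx hlog

theorem sq_mul_pow_log_le_rpow (N : ℕ) {x : ℝ} (hx : 1 ≤ x) :
    (N : ℝ) ^ 2 * x ^ Nat.log 2 N ≤ (N : ℝ) ^ (2 + logb 2 x) := by
  rcases eq_or_ne N 0 with rfl | hN
  · simpa using rpow_nonneg le_rfl _
  rw [rpow_add (by positivity), rpow_two]
  gcongr
  exact pow_log_le_rpow_logb one_lt_two hN hx

theorem card_le_mul_sum_pow {ι α : Type*} [Fintype ι] [DecidableEq ι] {t : Finset α}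
    {S : Finset (ι → α)} (hS : S ⊆ Fintype.piFinset fun _ => t) {w : α → ℝ}
    (hw : ∀ a ∈ t, 0 ≤ w a) {C : ℝ} (hC : 0 ≤ C)
    (h : ∀ k ∈ S, 1 ≤ C * ∏ i, w (k i)) :
    (#S : ℝ) ≤ C * (∑ a ∈ t, w a) ^ Fintype.card ι := by
  calc (#S : ℝ) = ∑ _k ∈ S, 1 := by simp
    _ ≤ ∑ k ∈ S, C * ∏ i, w (k i) := sum_le_sum h
    _ ≤ ∑ k ∈ Fintype.piFinset fun _ => t, C * ∏ i, w (k i) := by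
        refine sum_le_sum_of_subset_of_nonneg hS fun k hk _ => ?_
        have hk := Fintype.mem_piFinset.1 hk
        exact mul_nonneg hC (prod_nonneg fun i _ => hw _ (hk i))
    _ = C * (∑ a ∈ t, w a) ^ Fintype.card ι := by
        rw [← mul_sum, ← prod_univ_sum, prod_const, card_univ]

theorem sum_Icc_neg_succ {M : Type*} [AddCommMonoid M] (f : ℤ → M) (n : ℕ) :
    ∑ m ∈ Icc (-((n + 1 : ℕ) : ℤ)) (n + 1 : ℕ), f m =
      ∑ m ∈ Icc (-(n : ℤ)) n, f m + (f (n + 1) + f (-(n + 1))) := by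
  have hsplit : Icc (-((n + 1 : ℕ) : ℤ)) (n + 1 : ℕ) =
      insert ((n : ℤ) + 1) (insert (-((n : ℤ) + 1)) (Icc (-(n : ℤ)) n)) := by
    ext m
    simp only [mem_Icc, mem_insert]
    omega
  rw [hsplit, sum_insert (by simp; omega), sum_insert (by simp)]
  abel

noncomputable def hyperbolicWeight (c : ℝ) (m : ℤ) : ℝ :=
  ((1 + |(m : ℝ)|) ^ 2 * if m = 0 then 1 else c)⁻¹

theorem hyperbolicWeight_nonneg {c : ℝ} (hc : 0 ≤ c) (m : ℤ) :
    0 ≤ hyperbolicWeight c m := by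
  unfold hyperbolicWeight
  split_ifs <;> positivity

theorem hyperbolicWeight_natCast_succ (c : ℝ) (n : ℕ) :
    hyperbolicWeight c (n + 1) = (((n : ℝ) + 2) ^ 2)⁻¹ * c⁻¹ := by
  rw [hyperbolicWeight, if_neg (by omega), mul_inv]
  push_cast
  rw [abs_of_nonneg (by positivity)]
  ring

theorem hyperbolicWeight_neg (c : ℝ) (m : ℤ) :
    hyperbolicWeight c (-m) = hyperbolicWeight c m := by
  simp [hyperbolicWeight]

theorem sum_hyperbolicWeight_le {c : ℝ} (hc : 0 ≤ c) (N : ℕ) :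
    ∑ m ∈ Icc (-(N : ℤ)) N, hyperbolicWeight c m ≤
      1 + 2 / c * (1 - ((N : ℝ) + 1)⁻¹) := by
  induction N with
  | zero => simp [hyperbolicWeight]
  | succ n ih =>
    rw [sum_Icc_neg_succ, hyperbolicWeight_neg, hyperbolicWeight_natCast_succ]
    have htel : (((n : ℝ) + 2) ^ 2)⁻¹ ≤ ((n : ℝ) + 1)⁻¹ - ((n : ℝ) + 2)⁻¹ := by
      rw [inv_sub_inv (by positivity) (by positivity), add_sub_add_left_eq_sub]
      norm_num
      rw [sq, mul_inv]
      gcongr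
      linarith
    have hstep : (((n : ℝ) + 2) ^ 2)⁻¹ * c⁻¹ + (((n : ℝ) + 2) ^ 2)⁻¹ * c⁻¹ ≤
        2 / c * (((n : ℝ) + 1)⁻¹ - ((n : ℝ) + 2)⁻¹) := by
      calc _ = 2 / c * (((n : ℝ) + 2) ^ 2)⁻¹ := by ring
        _ ≤ _ := by gcongr
    push_cast
    linear_combination ih + hstep

theorem two_pow_card_ne_zero_le_prod {ι : Type*} [Fintype ι] (k : ι → ℤ) :
    2 ^ #{i | k i ≠ 0} ≤ ∏ i, (1 + |k i|) := by
  calc (2 : ℤ) ^ #{i | k i ≠ 0} = ∏ i, if k i ≠ 0 then 2 else 1 := by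
        rw [prod_ite, prod_const, prod_const_one, mul_one]
    _ ≤ ∏ i, (1 + |k i|) := by
        refine prod_le_prod (fun i _ => by split_ifs <;> norm_num) fun i _ => ?_
        split_ifs with h
        · linarith [Int.one_le_abs h]
        · simp

theorem prod_hyperbolicWeight {ι : Type*} [Fintype ι] (c : ℝ) (k : ι → ℤ) :
    ∏ i, hyperbolicWeight c (k i) =
      ((∏ i, (1 + |(k i : ℝ)|)) ^ 2 * c ^ #{i | k i ≠ 0})⁻¹ := by
  simp only [hyperbolicWeight]
  rw [prod_inv_distrib, prod_mul_distrib, prod_pow, prod_ite, prod_const_one, one_mul,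
    prod_const]

theorem one_le_mul_prod_hyperbolicWeight {ι : Type*} [Fintype ι] {c : ℝ} (hc : 1 ≤ c)
    {N : ℕ} {k : ι → ℤ} (hk : ∏ i, (1 + |k i|) ≤ N) :
    1 ≤ (N : ℝ) ^ 2 * c ^ Nat.log 2 N * ∏ i, hyperbolicWeight c (k i) := by
  have hsupp : #{i | k i ≠ 0} ≤ Nat.log 2 N :=
    Nat.le_log_of_pow_le one_lt_two <| by
      exact_mod_cast (two_pow_card_ne_zero_le_prod k).trans hk
  have hP : (1 : ℝ) ≤ ∏ i, (1 + |(k i : ℝ)|) :=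
    one_le_prod fun i _ => le_add_of_nonneg_right (abs_nonneg _)
  have hPN : ∏ i, (1 + |(k i : ℝ)|) ≤ N := by exact_mod_cast hk
  rw [prod_hyperbolicWeight, ← div_eq_mul_inv, one_le_div (by positivity)]
  gcongr

/-- Dimension-explicit cardinality bound for the modified hyperbolic cross
`Γ̃(N,d) = {k ∈ ℤ^d : ∏_j (1 + |k_j|) ≤ N}`: one has
`|Γ̃(N,d)| ≤ e^2 N^{2 + log_2 d}` for all `N ∈ ℕ` and `d ≥ 1`. -/
theorem stmt13 (d : ℕ) (hd : 1 ≤ d) (N : ℕ) :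
    (((Fintype.piFinset fun _ : Fin d => Finset.Icc (-(N : ℤ)) (N : ℤ)).filter
        fun k => (∏ j, (1 + |k j|)) ≤ (N : ℤ)).card : ℝ) ≤
      Real.exp 2 * (N : ℝ) ^ ((2 : ℝ) + Real.logb 2 d) := by
  have hd' : (1 : ℝ) ≤ d := by exact_mod_cast hd
  have hw : ∀ m, 0 ≤ hyperbolicWeight d m := hyperbolicWeight_nonneg d.cast_nonneg
  have hsum : ∑ m ∈ Icc (-(N : ℤ)) N, hyperbolicWeight d m ≤ 1 + 2 / d := by
    have : 0 ≤ 2 / (d : ℝ) * ((N : ℝ) + 1)⁻¹ := by positivity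
    linarith [sum_hyperbolicWeight_le (d.cast_nonneg : (0 : ℝ) ≤ d) N]
  calc _ ≤ (N : ℝ) ^ 2 * (d : ℝ) ^ Nat.log 2 N *
        (∑ m ∈ Icc (-(N : ℤ)) N, hyperbolicWeight d m) ^ d := by
        simpa using card_le_mul_sum_pow (ι := Fin d) (filter_subset _ _) (fun m _ => hw m)
          (by positivity) fun k hk => one_le_mul_prod_hyperbolicWeight hd' (mem_filter.1 hk).2
    _ ≤ (N : ℝ) ^ 2 * (d : ℝ) ^ Nat.log 2 N * exp 2 := by
        gcongr
        calc _ ≤ (1 + 2 / (d : ℝ)) ^ d := pow_le_pow_left₀ (sum_nonneg fun m _ => hw m) hsum d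
          _ ≤ exp 2 := one_add_div_pow_le_exp zero_le_two d
    _ ≤ _ := by
        rw [mul_comm]
        gcongr
        exact sq_mul_pow_log_le_rpow N hd'
end

section
/- For r > 1, ∑_{k ∈ ℤ^d, k > 0, ν(k) > N} ν(k)^{-r} ≍ N^{-r+1} (log N)^{d-1} as N → ∞, where ν(k) := k_1 k_2 ⋯ k_d, with constants depending only on r and d. -/
/-!
Write `S_d(x)` for the sum over `ν(k) > x`. Fixing the first coordinate `m` gives
`S_{d+1}(x) = ∑_{m ≥ 1} m^{-r} S_d(x / m)`, and `S_1(x) ≍ x^{1-r}` by comparison with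
`∫_x^∞ t^{-r} dt`. Induct on `d`, using `m^{-r} (x / m)^{1-r} = x^{1-r} / m`: for the lower bound
keep only `m ≤ √x`, where `log (x / m) ≥ (log x) / 2`; for the upper bound apply the induction
hypothesis for `m ≤ x` and the uniform bound `S_d ≤ ζ(r)^d` for `m > x`. Either way the harmonic
sum over `m` supplies the extra factor `log x`.
-/

open Real Finset
open scoped ENNReal

namespace ProductTail

variable {r : ℝ}

/-- Taken in `ℝ≥0∞` so that it can be rearranged without summability side conditions, and with a
real threshold `x` so that fixing the first coordinate `m` leaves the tail at `x / m`, without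
rounding. -/
noncomputable def tailSum (r : ℝ) (d : ℕ) (x : ℝ) : ℝ≥0∞ :=
  ∑' k : Fin d → ℕ, if (∀ j, 1 ≤ k j) ∧ x < ((∏ j, k j : ℕ) : ℝ)
    then ENNReal.ofReal (((∏ j, k j : ℕ) : ℝ) ^ (-r)) else 0

lemma tailSum_zero (r x : ℝ) : tailSum r 0 x = if x < 1 then 1 else 0 := by
  simp [tailSum]

lemma tailSum_succ (r : ℝ) (d : ℕ) (x : ℝ) :
    tailSum r (d + 1) x = ∑' m : ℕ, if 1 ≤ m
      then ENNReal.ofReal ((m : ℝ) ^ (-r)) * tailSum r d (x / m) else 0 := by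
  rw [tailSum, ← (Fin.consEquiv fun _ => ℕ).tsum_eq, ENNReal.tsum_prod']
  refine tsum_congr fun m => ?_
  rcases Nat.lt_or_ge m 1 with hm | hm
  · obtain rfl : m = 0 := by omega
    simp [Fin.forall_fin_succ]
  · have hm' : (0 : ℝ) < m := by exact_mod_cast hm
    rw [if_pos hm, tailSum, ← ENNReal.tsum_mul_left]
    refine tsum_congr fun k => ?_
    simp only [Fin.consEquiv_apply, Fin.forall_fin_succ, Fin.cons_zero, Fin.cons_succ,
      Fin.prod_cons, Nat.cast_mul, div_lt_iff₀' hm', hm, true_and]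
    split_ifs
    · rw [← ENNReal.ofReal_mul (by positivity), Real.mul_rpow (by positivity) (by positivity)]
    · rw [mul_zero]

lemma tailSum_one (r x : ℝ) :
    tailSum r 1 x = ∑' m : ℕ, if 1 ≤ m ∧ x < m then ENNReal.ofReal ((m : ℝ) ^ (-r)) else 0 := by
  rw [tailSum_succ]
  refine tsum_congr fun m => ?_
  rcases Nat.lt_or_ge m 1 with hm | hm
  · simp [hm.not_ge]
  · have hm' : (0 : ℝ) < m := by exact_mod_cast hm
    simp [tailSum_zero, hm, div_lt_one hm']

lemma tailSum_le_pow (r : ℝ) (d : ℕ) (x : ℝ) :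
    tailSum r d x ≤ (∑' m : ℕ, ENNReal.ofReal ((m : ℝ) ^ (-r))) ^ d := by
  induction d generalizing x with
  | zero => rw [tailSum_zero, pow_zero]; split_ifs <;> simp
  | succ d ih =>
    rw [tailSum_succ, pow_succ', ← ENNReal.tsum_mul_right]
    refine ENNReal.tsum_le_tsum fun m => ?_
    split_ifs
    · exact mul_le_mul_right (ih _) _
    · exact zero_le

lemma tailSum_le_ofReal_pow (hr : 1 < r) (d : ℕ) (x : ℝ) :
    tailSum r d x ≤ ENNReal.ofReal ((∑' m : ℕ, (m : ℝ) ^ (-r)) ^ d) := by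
  rw [ENNReal.ofReal_pow (tsum_nonneg fun m => by positivity),
    ENNReal.ofReal_tsum_of_nonneg (fun m => by positivity) (Real.summable_nat_rpow.2 (by linarith))]
  exact tailSum_le_pow r d x

lemma integral_Ioi_rpow_neg (hr : 1 < r) {c : ℝ} (hc : 0 < c) :
    ∫ t in Set.Ioi c, t ^ (-r) = c ^ (1 - r) / (r - 1) := by
  rw [integral_Ioi_rpow_of_lt (by linarith) hc, neg_add_eq_sub, neg_div, ← div_neg, neg_sub]

lemma antitoneOn_rpow_neg (hr : 0 ≤ r) {c : ℝ} (hc : 0 < c) :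
    AntitoneOn (fun t : ℝ => t ^ (-r)) (Set.Ici c) :=
  (Real.antitoneOn_rpow_Ioi_of_exponent_nonpos (by linarith)).mono fun _ ht => hc.trans_le ht

lemma tsum_nat_add_rpow_neg_le (hr : 1 < r) {N : ℕ} (hN : 1 ≤ N) :
    ∑' n : ℕ, ((n + N + 1 : ℕ) : ℝ) ^ (-r) ≤ (N : ℝ) ^ (1 - r) / (r - 1) := by
  have hN' : (0 : ℝ) < N := by exact_mod_cast hN
  rw [← integral_Ioi_rpow_neg hr hN']
  exact AntitoneOn.tsum_comp_add_le_integral N (antitoneOn_rpow_neg (by linarith) hN')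
    (integrableOn_Ioi_rpow_of_lt (by linarith) hN') fun t ht =>
      Real.rpow_nonneg (hN'.trans ht).le _

lemma le_tsum_nat_add_rpow_neg (hr : 1 < r) (N : ℕ) :
    ((N : ℝ) + 1) ^ (1 - r) / (r - 1) ≤ ∑' n : ℕ, ((n + N + 1 : ℕ) : ℝ) ^ (-r) := by
  have hN' : (0 : ℝ) < (N + 1 : ℕ) := by positivity
  have h := AntitoneOn.integral_le_tsum_comp_add (f := fun t : ℝ => t ^ (-r)) (N + 1)
    (antitoneOn_rpow_neg (by linarith) hN') (Real.summable_nat_rpow.2 (by linarith))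
    fun t ht => Real.rpow_nonneg (hN'.trans ht).le _
  rw [integral_Ioi_rpow_neg hr hN'] at h
  simpa only [Nat.cast_add, Nat.cast_one, ← add_assoc] using h

lemma tailSum_one_eq_ofReal_tsum (hr : 1 < r) {x : ℝ} (hx : 0 ≤ x) :
    tailSum r 1 x = ENNReal.ofReal (∑' n : ℕ, ((n + ⌊x⌋₊ + 1 : ℕ) : ℝ) ^ (-r)) := by
  have hhead : ∀ m ∈ range (⌊x⌋₊ + 1),
      (if 1 ≤ m ∧ x < m then ENNReal.ofReal ((m : ℝ) ^ (-r)) else 0) = 0 := fun m hm =>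
    if_neg fun h => ((Nat.floor_lt hx).2 h.2).not_ge (Nat.lt_succ_iff.1 (mem_range.1 hm))
  have htail : Summable fun n : ℕ => ((n + ⌊x⌋₊ + 1 : ℕ) : ℝ) ^ (-r) :=
    (summable_nat_add_iff (⌊x⌋₊ + 1)).2 (Real.summable_nat_rpow.2 (by linarith))
  rw [tailSum_one, ← ENNReal.summable.sum_add_tsum_nat_add' (k := ⌊x⌋₊ + 1), sum_eq_zero hhead,
    zero_add, ENNReal.ofReal_tsum_of_nonneg (fun n => by positivity) htail]
  exact tsum_congr fun n => if_pos ⟨by omega, (Nat.floor_lt hx).1 (by omega)⟩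

lemma tailSum_one_le (hr : 1 < r) {x : ℝ} (hx : 1 ≤ x) :
    tailSum r 1 x ≤ ENNReal.ofReal (2 ^ (r - 1) / (r - 1) * x ^ (1 - r)) := by
  have hN : 1 ≤ ⌊x⌋₊ := Nat.le_floor (by exact_mod_cast hx)
  have hxN : x / 2 ≤ ⌊x⌋₊ := by
    have := Nat.lt_floor_add_one x
    have : (1 : ℝ) ≤ ⌊x⌋₊ := by exact_mod_cast hN
    linarith
  rw [tailSum_one_eq_ofReal_tsum hr (by linarith)]
  refine ENNReal.ofReal_le_ofReal ((tsum_nat_add_rpow_neg_le hr hN).trans ?_)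
  calc (⌊x⌋₊ : ℝ) ^ (1 - r) / (r - 1) ≤ (x / 2) ^ (1 - r) / (r - 1) :=
        div_le_div_of_nonneg_right
          (Real.rpow_le_rpow_of_nonpos (by linarith) hxN (by linarith)) (by linarith)
    _ = 2 ^ (r - 1) / (r - 1) * x ^ (1 - r) := by
        rw [Real.div_rpow (by linarith) zero_le_two, show r - 1 = -(1 - r) by ring,
          Real.rpow_neg zero_le_two]
        ring

lemma ofReal_le_tailSum_one (hr : 1 < r) {x : ℝ} (hx : 1 ≤ x) :
    ENNReal.ofReal (2 ^ (1 - r) / (r - 1) * x ^ (1 - r)) ≤ tailSum r 1 x := by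
  have hxN : (⌊x⌋₊ : ℝ) + 1 ≤ 2 * x := by linarith [Nat.floor_le (by linarith : 0 ≤ x)]
  rw [tailSum_one_eq_ofReal_tsum hr (by linarith)]
  refine ENNReal.ofReal_le_ofReal (le_trans ?_ (le_tsum_nat_add_rpow_neg hr _))
  calc 2 ^ (1 - r) / (r - 1) * x ^ (1 - r) = (2 * x) ^ (1 - r) / (r - 1) := by
        rw [Real.mul_rpow zero_le_two (by linarith)]
        ring
    _ ≤ ((⌊x⌋₊ : ℝ) + 1) ^ (1 - r) / (r - 1) :=
        div_le_div_of_nonneg_right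
          (Real.rpow_le_rpow_of_nonpos (by positivity) hxN (by linarith)) (by linarith)

lemma sum_Icc_inv_eq_harmonic (n : ℕ) : ∑ m ∈ Icc 1 n, (m : ℝ)⁻¹ = harmonic n := by
  rw [harmonic_eq_sum_Icc]
  push_cast
  rfl

lemma log_le_sum_Icc_floor_inv {y : ℝ} (hy : 0 ≤ y) : log y ≤ ∑ m ∈ Icc 1 ⌊y⌋₊, (m : ℝ)⁻¹ := by
  rcases hy.eq_or_lt with rfl | hy
  · simp
  calc log y ≤ log ((⌊y⌋₊ + 1 : ℕ) : ℝ) := by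
        push_cast
        exact log_le_log hy (Nat.lt_floor_add_one y).le
    _ ≤ _ := by rw [sum_Icc_inv_eq_harmonic]; exact log_add_one_le_harmonic _

lemma sum_Icc_floor_inv_le_one_add_log {y : ℝ} (hy : 1 ≤ y) :
    ∑ m ∈ Icc 1 ⌊y⌋₊, (m : ℝ)⁻¹ ≤ 1 + log y := by
  have hN : (0 : ℝ) < ⌊y⌋₊ := by exact_mod_cast Nat.floor_pos.2 hy
  rw [sum_Icc_inv_eq_harmonic]
  exact (harmonic_le_one_add_log _).trans
    (by gcongr; exact Nat.floor_le (by linarith))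

lemma ofReal_rpow_neg_mul_ofReal {m x : ℝ} (hm : 0 < m) (hx : 0 ≤ x) (c L : ℝ) :
    ENNReal.ofReal (m ^ (-r)) * ENNReal.ofReal (c * (x / m) ^ (1 - r) * L) =
      ENNReal.ofReal (c * x ^ (1 - r) * L * m⁻¹) := by
  rw [← ENNReal.ofReal_mul (by positivity), Real.div_rpow hx hm.le]
  congr 1
  rw [Real.rpow_neg hm.le, Real.rpow_sub hm, Real.rpow_one]
  field_simp

lemma ofReal_le_rpow_neg_mul_tailSum {d e : ℕ} {c : ℝ} (hc : 0 ≤ c)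
    (h : ∀ y ≥ 1, ENNReal.ofReal (c * y ^ (1 - r) * log y ^ e) ≤ tailSum r d y)
    {x m : ℝ} (hx : 1 ≤ x) (hm : 0 < m) (hmx : m ≤ √x) :
    ENNReal.ofReal (c * x ^ (1 - r) * (log x / 2) ^ e * m⁻¹) ≤
      ENNReal.ofReal (m ^ (-r)) * tailSum r d (x / m) := by
  have hxm : 1 ≤ x / m := by
    rw [le_div_iff₀ hm, one_mul]
    exact hmx.trans (sqrt_le_self_iff.2 (Or.inr hx))
  have hlog : log x / 2 ≤ log (x / m) := by
    rw [log_div (by positivity) hm.ne']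
    linarith [log_le_log hm hmx, log_sqrt (by linarith : 0 ≤ x)]
  have : 0 ≤ log x := log_nonneg hx
  calc ENNReal.ofReal (c * x ^ (1 - r) * (log x / 2) ^ e * m⁻¹)
      = ENNReal.ofReal (m ^ (-r)) * ENNReal.ofReal (c * (x / m) ^ (1 - r) * (log x / 2) ^ e) := by
        rw [ofReal_rpow_neg_mul_ofReal hm (by linarith)]
    _ ≤ ENNReal.ofReal (m ^ (-r)) * ENNReal.ofReal (c * (x / m) ^ (1 - r) * log (x / m) ^ e) := by
        gcongr
    _ ≤ _ := by gcongr; exact h _ hxm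

lemma rpow_neg_mul_tailSum_le {d e : ℕ} {C : ℝ} (hC : 0 ≤ C)
    (h : ∀ y ≥ 1, tailSum r d y ≤ ENNReal.ofReal (C * y ^ (1 - r) * (1 + log y) ^ e))
    {x m : ℝ} (hm : 1 ≤ m) (hmx : m ≤ x) :
    ENNReal.ofReal (m ^ (-r)) * tailSum r d (x / m) ≤
      ENNReal.ofReal (C * x ^ (1 - r) * (1 + log x) ^ e * m⁻¹) := by
  have hm0 : 0 < m := by linarith
  have hxm : 1 ≤ x / m := by rwa [le_div_iff₀ hm0, one_mul]
  have : 0 ≤ log (x / m) := log_nonneg hxm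
  calc ENNReal.ofReal (m ^ (-r)) * tailSum r d (x / m)
      ≤ ENNReal.ofReal (m ^ (-r)) *
          ENNReal.ofReal (C * (x / m) ^ (1 - r) * (1 + log (x / m)) ^ e) := by
        gcongr; exact h _ hxm
    _ ≤ ENNReal.ofReal (m ^ (-r)) * ENNReal.ofReal (C * (x / m) ^ (1 - r) * (1 + log x) ^ e) := by
        gcongr ENNReal.ofReal _ * ENNReal.ofReal (_ * ?_)
        gcongr
        exact div_le_self (by linarith) hm
    _ = _ := ofReal_rpow_neg_mul_ofReal hm0 (by linarith) _ _

lemma ofReal_le_tailSum_succ {d e : ℕ} {c : ℝ} (hc : 0 ≤ c)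
    (h : ∀ y ≥ 1, ENNReal.ofReal (c * y ^ (1 - r) * log y ^ e) ≤ tailSum r d y)
    {x : ℝ} (hx : 1 ≤ x) :
    ENNReal.ofReal (c / 2 ^ (e + 1) * x ^ (1 - r) * log x ^ (e + 1)) ≤ tailSum r (d + 1) x := by
  have hlog : 0 ≤ log x := log_nonneg hx
  set K := c * x ^ (1 - r) * (log x / 2) ^ e
  have hterm : ∀ m ∈ Icc 1 ⌊√x⌋₊, ENNReal.ofReal (K * (m : ℝ)⁻¹) ≤
      if 1 ≤ m then ENNReal.ofReal ((m : ℝ) ^ (-r)) * tailSum r d (x / m) else 0 := by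
    intro m hm
    obtain ⟨hm1, hms⟩ := mem_Icc.1 hm
    rw [if_pos hm1]
    exact ofReal_le_rpow_neg_mul_tailSum hc h hx (by exact_mod_cast hm1)
      ((Nat.le_floor_iff (sqrt_nonneg x)).1 hms)
  calc ENNReal.ofReal (c / 2 ^ (e + 1) * x ^ (1 - r) * log x ^ (e + 1))
      ≤ ENNReal.ofReal (∑ m ∈ Icc 1 ⌊√x⌋₊, K * (m : ℝ)⁻¹) := by
        refine ENNReal.ofReal_le_ofReal ?_
        rw [← mul_sum]
        calc c / 2 ^ (e + 1) * x ^ (1 - r) * log x ^ (e + 1) = K * log √x := by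
              simp only [K]; rw [log_sqrt (by linarith), div_pow]; field_simp; ring
          _ ≤ _ := by gcongr; exact log_le_sum_Icc_floor_inv (sqrt_nonneg x)
    _ = ∑ m ∈ Icc 1 ⌊√x⌋₊, ENNReal.ofReal (K * (m : ℝ)⁻¹) :=
        ENNReal.ofReal_sum_of_nonneg fun m _ => by positivity
    _ ≤ _ := sum_le_sum hterm
    _ ≤ _ := ENNReal.sum_le_tsum _
    _ = tailSum r (d + 1) x := (tailSum_succ r d x).symm

lemma tailSum_succ_le (hr : 1 < r) {d e : ℕ} {B C : ℝ} (hB0 : 0 ≤ B) (hC : 0 ≤ C)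
    (hB : ∀ y, tailSum r d y ≤ ENNReal.ofReal B)
    (h : ∀ y ≥ 1, tailSum r d y ≤ ENNReal.ofReal (C * y ^ (1 - r) * (1 + log y) ^ e))
    {x : ℝ} (hx : 1 ≤ x) :
    tailSum r (d + 1) x ≤
      ENNReal.ofReal ((C + B * (2 ^ (r - 1) / (r - 1))) * x ^ (1 - r) * (1 + log x) ^ (e + 1)) := by
  have hlog : 0 ≤ log x := log_nonneg hx
  set K := C * x ^ (1 - r) * (1 + log x) ^ e
  have hsplit : ∀ m : ℕ,
      (if 1 ≤ m then ENNReal.ofReal ((m : ℝ) ^ (-r)) * tailSum r d (x / m) else 0) ≤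
        (if m ∈ Icc 1 ⌊x⌋₊ then ENNReal.ofReal (K * (m : ℝ)⁻¹) else 0) +
          (if 1 ≤ m ∧ x < m then ENNReal.ofReal ((m : ℝ) ^ (-r)) else 0) * ENNReal.ofReal B := by
    intro m
    rcases Nat.lt_or_ge m 1 with hm | hm
    · simp [hm.not_ge]
    rw [if_pos hm]
    by_cases hmx : (m : ℝ) ≤ x
    · rw [if_pos (mem_Icc.2 ⟨hm, Nat.le_floor hmx⟩)]
      exact le_add_right (rpow_neg_mul_tailSum_le hC h (by exact_mod_cast hm) hmx)
    · rw [if_pos (show 1 ≤ m ∧ x < m from ⟨hm, not_le.1 hmx⟩)]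
      exact le_add_left (by gcongr; exact hB _)
  calc tailSum r (d + 1) x
      ≤ ∑' m : ℕ, ((if m ∈ Icc 1 ⌊x⌋₊ then ENNReal.ofReal (K * (m : ℝ)⁻¹) else 0) +
          (if 1 ≤ m ∧ x < m then ENNReal.ofReal ((m : ℝ) ^ (-r)) else 0) * ENNReal.ofReal B) := by
        rw [tailSum_succ]; exact ENNReal.tsum_le_tsum hsplit
    _ = ∑ m ∈ Icc 1 ⌊x⌋₊, ENNReal.ofReal (K * (m : ℝ)⁻¹) + tailSum r 1 x * ENNReal.ofReal B := by
        rw [ENNReal.tsum_add, ENNReal.tsum_mul_right, tailSum_one,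
          tsum_eq_sum fun m hm => if_neg hm]
        exact congrArg (· + _) (sum_congr rfl fun m hm => if_pos hm)
    _ ≤ ENNReal.ofReal (K * (1 + log x)) +
          ENNReal.ofReal (2 ^ (r - 1) / (r - 1) * x ^ (1 - r)) * ENNReal.ofReal B := by
        rw [← ENNReal.ofReal_sum_of_nonneg fun m _ => by positivity, ← mul_sum]
        gcongr
        · exact sum_Icc_floor_inv_le_one_add_log hx
        · exact tailSum_one_le hr hx
    _ ≤ _ := by
        rw [← ENNReal.ofReal_mul (by positivity), ← ENNReal.ofReal_add (by positivity)
          (by positivity)]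
        refine ENNReal.ofReal_le_ofReal ?_
        have h1 : B * (2 ^ (r - 1) / (r - 1)) * x ^ (1 - r) * 1 ≤
            B * (2 ^ (r - 1) / (r - 1)) * x ^ (1 - r) * (1 + log x) ^ (e + 1) :=
          mul_le_mul_of_nonneg_left (one_le_pow₀ (by linarith)) (by positivity)
        simp only [K]
        rw [pow_succ] at h1 ⊢
        linarith

lemma exists_ofReal_le_tailSum (hr : 1 < r) (e : ℕ) :
    ∃ c > 0, ∀ x ≥ 1, ENNReal.ofReal (c * x ^ (1 - r) * log x ^ e) ≤ tailSum r (e + 1) x := by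
  induction e with
  | zero =>
    exact ⟨2 ^ (1 - r) / (r - 1), div_pos (by positivity) (by linarith),
      fun x hx => by simpa using ofReal_le_tailSum_one hr hx⟩
  | succ e ih =>
    obtain ⟨c, hc, h⟩ := ih
    exact ⟨c / 2 ^ (e + 1), by positivity, fun x hx => ofReal_le_tailSum_succ hc.le h hx⟩

lemma exists_tailSum_le_ofReal (hr : 1 < r) (e : ℕ) :
    ∃ C > 0, ∀ x ≥ 1,
      tailSum r (e + 1) x ≤ ENNReal.ofReal (C * x ^ (1 - r) * (1 + log x) ^ e) := by
  induction e with
  | zero =>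
    exact ⟨2 ^ (r - 1) / (r - 1), div_pos (by positivity) (by linarith),
      fun x hx => by simpa using tailSum_one_le hr hx⟩
  | succ e ih =>
    obtain ⟨C, hC, h⟩ := ih
    have hζ : 0 ≤ (∑' m : ℕ, (m : ℝ) ^ (-r)) ^ (e + 1) := by positivity
    exact ⟨_, by positivity, fun x hx =>
      tailSum_succ_le hr hζ hC.le (tailSum_le_ofReal_pow hr (e + 1)) h hx⟩

lemma toReal_tailSum_natCast (r : ℝ) (d N : ℕ) :
    (tailSum r d N).toReal = ∑' k : Fin d → ℕ, if (∀ j, 1 ≤ k j) ∧ N < ∏ j, k j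
      then ((∏ j, k j : ℕ) : ℝ) ^ (-r) else 0 := by
  rw [tailSum, ENNReal.tsum_toReal_eq fun k => by split_ifs <;> simp]
  refine tsum_congr fun k => ?_
  simp only [Nat.cast_lt]
  split_ifs
  · exact ENNReal.toReal_ofReal (by positivity)
  · rfl

end ProductTail

open ProductTail in
/-- For `r > 1`, `∑_{k > 0, ν(k) > N} ν(k)^{-r} ≍ N^{-r+1} (log N)^{d-1}` where
`ν(k) = k_1 ⋯ k_d`, with constants depending only on `r` and `d`. -/
theorem stmt15 (d : ℕ) (hd : 1 ≤ d) (r : ℝ) (hr : 1 < r) :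
    ∃ c C : ℝ, 0 < c ∧ 0 < C ∧ ∀ N : ℕ, 2 ≤ N →
      c * (N : ℝ) ^ (-r + 1) * Real.log N ^ (d - 1) ≤
        (∑' k : Fin d → ℕ, if (∀ j, 1 ≤ k j) ∧ N < ∏ j, k j
          then ((∏ j, k j : ℕ) : ℝ) ^ (-r) else 0) ∧
      (∑' k : Fin d → ℕ, if (∀ j, 1 ≤ k j) ∧ N < ∏ j, k j
          then ((∏ j, k j : ℕ) : ℝ) ^ (-r) else 0) ≤
        C * (N : ℝ) ^ (-r + 1) * Real.log N ^ (d - 1) := by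
  obtain ⟨c, hc, hlower⟩ := exists_ofReal_le_tailSum hr (d - 1)
  obtain ⟨C, hC, hupper⟩ := exists_tailSum_le_ofReal hr (d - 1)
  rw [Nat.sub_add_cancel hd] at hlower hupper
  refine ⟨c, 3 ^ (d - 1) * C, hc, by positivity, fun N hN => ?_⟩
  have hN1 : (1 : ℝ) ≤ N := by exact_mod_cast (by omega : 1 ≤ N)
  have hlog : 1 + log N ≤ 3 * log N := by
    have := log_le_log two_pos (by exact_mod_cast hN : (2 : ℝ) ≤ N)
    linarith [log_two_gt_d9]
  have hfin : tailSum r d N ≠ ⊤ := ne_top_of_le_ne_top ENNReal.ofReal_ne_top (hupper N hN1)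
  rw [← toReal_tailSum_natCast, neg_add_eq_sub]
  refine ⟨(ENNReal.ofReal_le_iff_le_toReal hfin).1 (hlower N hN1), ?_⟩
  calc (tailSum r d N).toReal ≤ C * (N : ℝ) ^ (1 - r) * (1 + log N) ^ (d - 1) :=
        ENNReal.toReal_le_of_le_ofReal (by positivity) (hupper N hN1)
    _ ≤ C * (N : ℝ) ^ (1 - r) * (3 * log N) ^ (d - 1) := by gcongr
    _ = 3 ^ (d - 1) * C * (N : ℝ) ^ (1 - r) * log N ^ (d - 1) := by ring
end
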